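/- Let 0 < ξ < 1, h ≥ 1 and p = 1 − (1/2 − ξ/8)^{1/h}. Then for every natural k ≤ (1−ξ)h, 1 − (1−p)^k ≤ 1/2 − ξ/8, and for every k ≥ h, (1−p)^k ≤ 1/2 − ξ/8. -/
import Mathlib

lemma bernoulli_key (ξ : ℝ) (h0 : 0 < ξ) (h1 : ξ < 1) :
    1 / 2 + ξ / 8 ≤ (1 / 2 - ξ / 8) ^ ((1 : ℝ) - ξ) := by
  set a : ℝ := 1 / 2 - ξ / 8 with ha
  have ha0 : 0 < a := by rw [ha]; linarith
  have hgm : a ^ ξ ≤ ξ * a + (1 - ξ) * 1 := by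
    have h := Real.geom_mean_le_arith_mean2_weighted h0.le (by linarith : (0:ℝ) ≤ 1 - ξ)
      ha0.le zero_le_one (by ring)
    simpa using h
  have hsplit : a ^ ((1 : ℝ) - ξ) = a / a ^ ξ := by
    rw [Real.rpow_sub ha0, Real.rpow_one]
  rw [hsplit, le_div_iff₀ (Real.rpow_pos_of_pos ha0 ξ)]
  calc (1 / 2 + ξ / 8) * a ^ ξ ≤ (1 / 2 + ξ / 8) * (ξ * a + (1 - ξ) * 1) := by
        apply mul_le_mul_of_nonneg_left hgm (by linarith)
    _ ≤ a := by rw [ha]; nlinarith [sq_nonneg ξ, mul_pos (mul_pos h0 h0) h0]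

/-- A Bernoulli counter with success probability `p = 1 − (1/2 − ξ/8)^{1/h}` is
an `(h, (1−ξ)h)`-counter with error probability `1/2 − ξ/8`. -/
theorem bernoulli_counter (ξ h : ℝ) (h0 : 0 < ξ) (h1 : ξ < 1) (hh : 1 ≤ h) :
    let p : ℝ := 1 - (1 / 2 - ξ / 8) ^ ((1 : ℝ) / h)
    ∀ k : ℕ, ((k : ℝ) ≤ (1 - ξ) * h → 1 - (1 - p) ^ k ≤ 1 / 2 - ξ / 8) ∧
      (h ≤ (k : ℝ) → (1 - p) ^ k ≤ 1 / 2 - ξ / 8) := by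
  intro p k
  have ha0 : (0:ℝ) < 1 / 2 - ξ / 8 := by linarith
  have ha1 : (1:ℝ) / 2 - ξ / 8 < 1 := by linarith
  have hh0 : (0:ℝ) < h := by linarith
  have hpow : (1 - p) ^ k = (1 / 2 - ξ / 8) ^ ((k : ℝ) / h) := by
    have hp : 1 - p = (1 / 2 - ξ / 8) ^ ((1:ℝ) / h) := by simp [p]
    rw [hp, ← Real.rpow_natCast ((1 / 2 - ξ / 8) ^ ((1:ℝ)/h)) k, ← Real.rpow_mul ha0.le]
    ring_nf
  constructor
  · intro hk
    have hexp : (k : ℝ) / h ≤ 1 - ξ := by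
      rw [div_le_iff₀ hh0]; linarith [hk]
    have h2 : (1 / 2 - ξ / 8) ^ ((1:ℝ) - ξ) ≤ (1 / 2 - ξ / 8) ^ ((k : ℝ) / h) :=
      Real.rpow_le_rpow_of_exponent_ge ha0 ha1.le hexp
    have h3 := bernoulli_key ξ h0 h1
    rw [hpow]; linarith
  · intro hk
    have hexp : (1:ℝ) ≤ (k : ℝ) / h := by
      rw [le_div_iff₀ hh0]; linarith
    have h2 : (1 / 2 - ξ / 8) ^ ((k : ℝ) / h) ≤ (1 / 2 - ξ / 8) ^ (1:ℝ) :=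
      Real.rpow_le_rpow_of_exponent_ge ha0 ha1.le hexp
    rw [hpow]
    simpa using h2
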